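/- arXiv:1804.07393 — 4 statements merged into one kernel-verified Lean document; each statement's English description precedes it below -/
import Mathlib

section
/- In any reachable 2048 position on an n₁ × n₂ board, every tile value equals 2^k for some k with 1 ≤ k ≤ n₁·n₂ + 1; in particular the maximum achievable tile value is at most 2^(n₁·n₂+1). -/
/-- Abstract 2048 model: states are multisets of exponents on a board with `N` cells. -/
inductive Reachable (N : ℕ) : Multiset ℕ → Prop
  | empty : Reachable N 0
  | insert1 {M : Multiset ℕ} : Reachable N M → Multiset.card M < N →
      Reachable N (1 ::ₘ M)
  | insert2 {M : Multiset ℕ} : Reachable N M → Multiset.card M < N →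
      Reachable N (2 ::ₘ M)
  | merge {M : Multiset ℕ} {k : ℕ} : Reachable N (k ::ₘ k ::ₘ M) →
      Reachable N ((k + 1) ::ₘ M)

private lemma card_filter_cons (a : ℕ) (s : Multiset ℕ) (t : ℕ) :
    ((a ::ₘ s).filter (t ≤ ·)).card
      = (s.filter (t ≤ ·)).card + (if t ≤ a then 1 else 0) := by
  by_cases h : t ≤ a
  · rw [Multiset.filter_cons_of_pos _ h]; simp [h]
  · rw [Multiset.filter_cons_of_neg _ h]; simp [h]

private lemma reachable_invariant {N : ℕ} {M : Multiset ℕ} (h : Reachable N M) :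
    ∀ t, (M.filter (t ≤ ·)).card ≠ 0 → t + (M.filter (t ≤ ·)).card ≤ N + 2 := by
  induction h with
  | empty => intro t ht; simp at ht
  | @insert1 M hM hc ih =>
      intro t ht
      rw [card_filter_cons] at ht ⊢
      by_cases h1 : t ≤ 1
      · have hle : (M.filter (t ≤ ·)).card ≤ M.card := Multiset.card_le_card (Multiset.filter_le _ _)
        simp only [if_pos h1] at *
        omega
      · simp only [if_neg h1] at ht ⊢
        simpa using ih t (by simpa using ht)
  | @insert2 M hM hc ih =>
      intro t ht
      rw [card_filter_cons] at ht ⊢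
      by_cases h1 : t ≤ 2
      · have hle : (M.filter (t ≤ ·)).card ≤ M.card := Multiset.card_le_card (Multiset.filter_le _ _)
        simp only [if_pos h1] at *
        omega
      · simp only [if_neg h1] at ht ⊢
        simpa using ih t (by simpa using ht)
  | @merge M k hM ih =>
      intro t ht
      rw [card_filter_cons] at ht ⊢
      by_cases h1 : t ≤ k
      · -- use invariant at t : the old board has two extra elements ≥ t
        have := ih t (by rw [card_filter_cons, card_filter_cons]; simp [h1])
        rw [card_filter_cons, card_filter_cons] at this
        simp only [if_pos h1] at this
        have h2 : t ≤ k + 1 := by omega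
        simp only [if_pos h2] at ht ⊢
        omega
      · by_cases h2 : t ≤ k + 1
        · -- t = k + 1; use invariant at k
          have htk : t = k + 1 := by omega
          subst htk
          have := ih k (by rw [card_filter_cons, card_filter_cons]; simp)
          rw [card_filter_cons, card_filter_cons] at this
          simp only [if_pos (le_refl k)] at this
          have hmono : (M.filter (k + 1 ≤ ·)).card ≤ (M.filter (k ≤ ·)).card := by
            refine Multiset.card_le_card (Multiset.monotone_filter_right _ ?_)
            intro x hx; omega
          simp only [if_pos h2] at ht ⊢
          omega
        · simp only [if_neg h2] at ht ⊢
          have := ih t (by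
            rw [card_filter_cons, card_filter_cons]
            simp only [if_neg h1, if_neg h2]
            omega)
          rw [card_filter_cons, card_filter_cons] at this
          simp only [if_neg h1] at this
          omega

/-- Every exponent on a reachable `n₁ × n₂` board is at most `n₁·n₂ + 1`;
in particular the maximum tile value is at most `2 ^ (n₁·n₂ + 1)`. -/
theorem exponent_le_of_reachable (n₁ n₂ : ℕ) (M : Multiset ℕ)
    (h : Reachable (n₁ * n₂) M) : ∀ e ∈ M, e ≤ n₁ * n₂ + 1 := by
  intro e he
  have hmem : e ∈ M.filter (e ≤ ·) := Multiset.mem_filter.2 ⟨he, le_refl e⟩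
  have hpos : 0 < (M.filter (e ≤ ·)).card :=
    Multiset.card_pos_iff_exists_mem.2 ⟨e, hmem⟩
  have := reachable_invariant h e (by omega)
  omega
end

section
/- A tile of value 2^(n₁·n₂+1) is achievable on an n₁ × n₂ board (with n₁, n₂ ≥ 1, n₁·n₂ ≥ 2): there is a finite sequence of abstract 2048 moves (creations of 2s and 4s and merges of equal pairs, never exceeding n₁·n₂ tiles on the board) producing a tile with exponent n₁·n₂+1. -/
lemma build_tile (N : ℕ) : ∀ k (M : Multiset ℕ), Reachable N M →
    Multiset.card M + (k + 1) ≤ N → Reachable N ((k + 2) ::ₘ M) := by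
  intro k
  induction k with
  | zero =>
    intro M hM hc
    exact Reachable.insert2 hM (by omega)
  | succ k ih =>
    intro M hM hc
    have h1 : Reachable N ((k + 2) ::ₘ M) := ih M hM (by omega)
    have h2 : Reachable N ((k + 2) ::ₘ (k + 2) ::ₘ M) :=
      ih _ h1 (by simp; omega)
    exact Reachable.merge h2

/-- A tile of value `2 ^ (n₁·n₂ + 1)` is achievable on the `n₁ × n₂` board. -/
theorem max_exponent_reachable (n₁ n₂ : ℕ) (h₁ : 1 ≤ n₁) (h₂ : 1 ≤ n₂)
    (h : 2 ≤ n₁ * n₂) :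
    ∃ M : Multiset ℕ, Reachable (n₁ * n₂) M ∧ n₁ * n₂ + 1 ∈ M := by
  obtain ⟨m, hm⟩ : ∃ m, n₁ * n₂ = m + 2 := ⟨n₁ * n₂ - 2, by omega⟩
  refine ⟨{n₁ * n₂ + 1}, ?_, by simp⟩
  have := build_tile (n₁ * n₂) (m + 1) 0 Reachable.empty (by simp [hm])
  simpa [hm, show m + 1 + 2 = m + 2 + 1 by omega] using this
end

section
/- On a 2 × 2 board the maximum achievable tile value is exactly 2^5 = 32: exponent 5 is reachable in the abstract 2048 model with N = 4 cells, and exponent 6 is not reachable. -/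
/-- number of tiles with exponent ≥ j -/
def cnt (j : ℕ) (M : Multiset ℕ) : ℕ := (M.filter (fun x => j ≤ x)).card

lemma cnt_cons (j a : ℕ) (M : Multiset ℕ) :
    cnt j (a ::ₘ M) = (if j ≤ a then 1 else 0) + cnt j M := by
  unfold cnt
  by_cases h : j ≤ a <;> simp [Multiset.filter_cons, h] <;> omega

lemma cnt_le_card (j : ℕ) (M : Multiset ℕ) : cnt j M ≤ M.card :=
  Multiset.card_le_card (Multiset.filter_le _ _)

lemma cnt_mono (j j' : ℕ) (h : j ≤ j') (M : Multiset ℕ) : cnt j' M ≤ cnt j M := by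
  apply Multiset.card_le_card
  apply Multiset.monotone_filter_right
  intro x hx
  exact le_trans h hx

lemma inv {M : Multiset ℕ} (h : Reachable 4 M) :
    M.card ≤ 4 ∧ ∀ j, 1 ≤ j → cnt j M + j ≤ 6 ∨ cnt j M = 0 := by
  induction h with
  | empty => constructor <;> simp [cnt]
  | insert1 h hc ih =>
      rename_i M'
      obtain ⟨hcard, hf⟩ := ih
      refine ⟨by simp; omega, fun j hj => ?_⟩
      rw [cnt_cons]
      rcases Nat.lt_or_ge j 2 with hj2 | hj2
      · left
        have := cnt_le_card j M'
        interval_cases j <;> simp <;> omega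
      · have := hf j hj
        have hja : ¬ j ≤ 1 := by omega
        simp [hja]
        omega
  | insert2 h hc ih =>
      rename_i M'
      obtain ⟨hcard, hf⟩ := ih
      refine ⟨by simp; omega, fun j hj => ?_⟩
      rw [cnt_cons]
      rcases Nat.lt_or_ge j 3 with hj2 | hj2
      · left
        have := cnt_le_card j M'
        have := hf j hj
        by_cases hja : j ≤ 2 <;> simp [hja] <;> omega
      · have := hf j hj
        have hja : ¬ j ≤ 2 := by omega
        simp [hja]
        omega
  | merge h ih =>
      rename_i M' k
      obtain ⟨hcard, hf⟩ := ih
      simp only [Multiset.card_cons] at hcard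
      refine ⟨by simp; omega, fun j hj => ?_⟩
      rw [cnt_cons]
      by_cases hjk : j ≤ k
      · have hjk1 : j ≤ k + 1 := by omega
        have := hf j hj
        rw [cnt_cons, cnt_cons] at this
        simp [hjk, hjk1] at this ⊢
        omega
      · by_cases hjk1 : j ≤ k + 1
        · have hjeq : j = k + 1 := by omega
          left
          simp [hjk1]
          rcases Nat.eq_zero_or_pos k with hk0 | hk0
          · have := cnt_le_card j M'
            omega
          · have := hf k hk0
            rw [cnt_cons, cnt_cons] at this
            simp at this
            have hm := cnt_mono k j (by omega) M'
            omega
        · have := hf j hj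
          rw [cnt_cons, cnt_cons] at this
          have hk : ¬ j ≤ k := by omega
          simp [hk, hjk1] at this ⊢
          omega

lemma r3 {M : Multiset ℕ} (h : Reachable 4 M) (hc : M.card ≤ 2) :
    Reachable 4 (3 ::ₘ M) :=
  Reachable.merge (k := 2)
    (Reachable.insert2 (Reachable.insert2 h (by omega)) (by simp; omega))

lemma r4 {M : Multiset ℕ} (h : Reachable 4 M) (hc : M.card ≤ 1) :
    Reachable 4 (4 ::ₘ M) :=
  Reachable.merge (k := 3) (r3 (r3 h (by omega)) (by simp; omega))

lemma r5 : Reachable 4 ({5} : Multiset ℕ) :=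
  Reachable.merge (k := 4) (r4 (r4 Reachable.empty (by simp)) (by simp))

/-- On a `2 × 2` board (`N = 4` cells) the maximum achievable tile value is
exactly `2^5 = 32`: exponent 5 is reachable and exponent 6 is not. -/
theorem two_by_two_max_value :
    (∃ M : Multiset ℕ, Reachable 4 M ∧ 5 ∈ M) ∧
    (∀ M : Multiset ℕ, Reachable 4 M → 6 ∉ M) := by
  constructor
  · exact ⟨{5}, r5, by simp⟩
  · intro M hM h6
    obtain ⟨-, hf⟩ := inv hM
    have := hf 6 (by norm_num)
    have h1 : 1 ≤ cnt 6 M := by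
      unfold cnt
      rw [Nat.one_le_iff_ne_zero, Ne, Multiset.card_eq_zero, Multiset.filter_eq_nil]
      push_neg
      exact ⟨6, h6, le_refl 6⟩
    omega
end

section
/- For a d-dimensional board of size n₁ × n₂ × … × n_d, the maximum achievable tile value is 2^((∏ᵢ nᵢ) + 1): this exponent is reachable and no larger exponent is reachable, given ∏ᵢ nᵢ ≥ 2. -/
theorem Multiset.countP_le_countP_of_imp {α : Type*} {p q : α → Prop} [DecidablePred p]
    [DecidablePred q] (s : Multiset α) (h : ∀ a, p a → q a) : s.countP p ≤ s.countP q := by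
  simp only [Multiset.countP_eq_card_filter]
  exact Multiset.card_le_card (Multiset.monotone_filter_right s h)

namespace Reachable

variable {N : ℕ} {M : Multiset ℕ}

theorem cons_succ {j : ℕ} (hj : 1 ≤ j) (hM : Reachable N M) (hcard : M.card + j ≤ N) :
    Reachable N ((j + 1) ::ₘ M) := by
  induction j, hj using Nat.le_induction generalizing M with
  | base => exact hM.insert2 (by omega)
  | succ j hj ih =>
    have hj₁ : Reachable N ((j + 1) ::ₘ M) := ih hM (by omega)
    have hj₂ : Reachable N ((j + 1) ::ₘ (j + 1) ::ₘ M) :=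
      ih hj₁ (by rw [Multiset.card_cons]; omega)
    exact hj₂.merge

theorem exists_mem_succ (hN : 1 ≤ N) : ∃ M, Reachable N M ∧ N + 1 ∈ M :=
  ⟨{N + 1}, empty.cons_succ hN (by simp), Multiset.mem_singleton_self _⟩

theorem countP_le (hM : Reachable N M) (t : ℕ) : M.countP (t ≤ ·) ≤ N + 2 - t := by
  induction hM generalizing t with
  | empty => simp
  | @insert1 M _ hcard ih | @insert2 M _ hcard ih =>
    have := M.countP_le_card (t ≤ ·)
    have := ih t
    rw [Multiset.countP_cons]
    split_ifs <;> omega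
  | @merge M k _ ih =>
    simp only [Multiset.countP_cons] at ih ⊢
    obtain rfl | hne := eq_or_ne t (k + 1)
    · have h_k := ih k
      have h_mono := M.countP_le_countP_of_imp (p := (k + 1 ≤ ·)) (q := (k ≤ ·)) (fun _ ↦ by omega)
      simp only [le_refl, if_true] at h_k ⊢
      omega
    · have h_t := ih t
      split_ifs at h_t ⊢ <;> omega

theorem le_succ_of_mem (hM : Reachable N M) {x : ℕ} (hx : x ∈ M) : x ≤ N + 1 := by
  have hpos : 0 < M.countP (x ≤ ·) := Multiset.countP_pos.2 ⟨x, hx, le_rfl⟩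
  have := hM.countP_le x
  omega

end Reachable

/-- On a `d`-dimensional board of size `n₁ × ⋯ × n_d` with `N = ∏ᵢ nᵢ ≥ 2`
cells, the maximum achievable tile value is `2 ^ (N + 1)`: exponent `N + 1`
is reachable and exponent `N + 2` is not. -/
theorem d_dimensional_max_value (d : ℕ) (n : Fin d → ℕ)
    (h : 2 ≤ ∏ i, n i) :
    (∃ M : Multiset ℕ, Reachable (∏ i, n i) M ∧ (∏ i, n i) + 1 ∈ M) ∧
    (∀ M : Multiset ℕ, Reachable (∏ i, n i) M → (∏ i, n i) + 2 ∉ M) :=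
  ⟨Reachable.exists_mem_succ (by omega), fun _ hM hmem ↦ by
    have := hM.le_succ_of_mem hmem
    omega⟩
end
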